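/- In the free k-module with basis the reduced planar trees, the grafting product ↷σ is left pre-Lie: for all reduced planar trees s, t, u, one has s ↷σ (t ↷σ u) − (s ↷σ t) ↷σ u = t ↷σ (s ↷σ u) − (t ↷σ s) ↷σ u. -/
import Mathlib


/-- Reduced planar trees: the leaf `|`, or `∨(t1,…,tn)` with `n ≥ 2`; the internal
vertex `∨(t1,t2,…,tn)` is encoded as `node t1 t2 [t3,…,tn]`, so that the list of
branches automatically has length at least `2`. -/
inductive R : Type
  | leaf : R
  | node : R → R → List R → R

mutual
/-- List of all graftings of `t` at the successive leaves (left to right) of a tree. -/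
def graftings (t : R) : R → List R
  | .leaf => [t]
  | .node t1 t2 rest =>
      (graftings t t1).map (fun t1' => R.node t1' t2 rest) ++
      (graftings t t2).map (fun t2' => R.node t1 t2' rest) ++
      (graftingsL t rest).map (fun rest' => R.node t1 t2 rest')

/-- All ways to graft `t` at one leaf of one of the trees of a list of trees. -/
def graftingsL (t : R) : List R → List (List R)
  | [] => []
  | u :: us =>
      (graftings t u).map (fun u' => u' :: us) ++
      (graftingsL t us).map (fun us' => u :: us')
end

variable {k : Type*} [CommRing k]

/-- The grafting product on basis elements: `t ↷σ u` is the sum of all graftings of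
`t` at the leaves of `u`, in the free `k`-module with basis the reduced planar trees. -/
noncomputable def bp (t u : R) : R →₀ k :=
  ((graftings t u).map (fun v => Finsupp.single v (1 : k))).sum

/-- The bilinear extension of the grafting product `↷σ` to the free `k`-module with
basis the reduced planar trees. -/
noncomputable def graftMul (x y : R →₀ k) : R →₀ k :=
  x.sum fun t a => y.sum fun u b => (a * b) • bp t u

/-- The embedding of a reduced planar tree as a basis element of the free module. -/
noncomputable def e (t : R) : R →₀ k := Finsupp.single t 1

/-! ### Multiset versions of graftings -/

def G (t u : R) : Multiset R := (graftings t u : Multiset R)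

def GrL (t : R) (us : List R) : Multiset (List R) := (graftingsL t us : Multiset (List R))

lemma G_leaf (t : R) : G t .leaf = {t} := rfl

lemma G_node (t t1 t2 : R) (rest : List R) :
    G t (.node t1 t2 rest) =
      (G t t1).map (fun a => R.node a t2 rest) +
      (G t t2).map (fun b => R.node t1 b rest) +
      (GrL t rest).map (fun r => R.node t1 t2 r) := rfl

lemma GL_nil (t : R) : GrL t [] = 0 := rfl

lemma GL_cons (t u : R) (us : List R) :
    GrL t (u :: us) =
      (G t u).map (fun a => a :: us) + (GrL t us).map (fun r => u :: r) := rfl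

/-! ### Graftings at two distinct leaves -/

mutual
/-- All ways to graft `s` at one leaf and `t` at another (distinct) leaf of `u`. -/
def C (s t : R) : R → Multiset R
  | .leaf => 0
  | .node t1 t2 rest =>
      (C s t t1).map (fun a => R.node a t2 rest) +
      (C s t t2).map (fun b => R.node t1 b rest) +
      (CL s t rest).map (fun r => R.node t1 t2 r) +
      ((G t t1).bind fun a => (G s t2).map fun b => R.node a b rest) +
      ((G t t1).bind fun a => (GrL s rest).map fun r => R.node a t2 r) +
      ((G t t2).bind fun b => (G s t1).map fun a => R.node a b rest) +
      ((G t t2).bind fun b => (GrL s rest).map fun r => R.node t1 b r) +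
      ((GrL t rest).bind fun r => (G s t1).map fun a => R.node a t2 r) +
      ((GrL t rest).bind fun r => (G s t2).map fun b => R.node t1 b r)

/-- All ways to graft `s` at one leaf and `t` at another (distinct) leaf of a list. -/
def CL (s t : R) : List R → Multiset (List R)
  | [] => 0
  | u :: us =>
      (C s t u).map (fun a => a :: us) +
      (CL s t us).map (fun r => u :: r) +
      ((G t u).bind fun a => (GrL s us).map fun r => a :: r) +
      ((GrL t us).bind fun r => (G s u).map fun a => a :: r)
end

mutual
theorem C_comm : ∀ (s t u : R), C s t u = C t s u
  | s, t, .leaf => rfl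
  | s, t, .node t1 t2 rest => by
      have h1 : ((G t t1).bind fun a => (G s t2).map fun b => R.node a b rest)
          = ((G s t2).bind fun b => (G t t1).map fun a => R.node a b rest) :=
        Multiset.bind_map_comm _ _
      have h2 : ((G t t1).bind fun a => (GrL s rest).map fun r => R.node a t2 r)
          = ((GrL s rest).bind fun r => (G t t1).map fun a => R.node a t2 r) :=
        Multiset.bind_map_comm _ _
      have h3 : ((G t t2).bind fun b => (GrL s rest).map fun r => R.node t1 b r)
          = ((GrL s rest).bind fun r => (G t t2).map fun b => R.node t1 b r) :=
        Multiset.bind_map_comm _ _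
      have h4 : ((G t t2).bind fun b => (G s t1).map fun a => R.node a b rest)
          = ((G s t1).bind fun a => (G t t2).map fun b => R.node a b rest) :=
        Multiset.bind_map_comm _ _
      have h5 : ((GrL t rest).bind fun r => (G s t1).map fun a => R.node a t2 r)
          = ((G s t1).bind fun a => (GrL t rest).map fun r => R.node a t2 r) :=
        Multiset.bind_map_comm _ _
      have h6 : ((GrL t rest).bind fun r => (G s t2).map fun b => R.node t1 b r)
          = ((G s t2).bind fun b => (GrL t rest).map fun r => R.node t1 b r) :=
        Multiset.bind_map_comm _ _
      rw [C, C, C_comm s t t1, C_comm s t t2, CL_comm s t rest, h1, h2, h3, h4, h5, h6]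
      abel

theorem CL_comm : ∀ (s t : R) (us : List R), CL s t us = CL t s us
  | s, t, [] => rfl
  | s, t, u :: us => by
      have h1 : ((G t u).bind fun a => (GrL s us).map fun r => a :: r)
          = ((GrL s us).bind fun r => (G t u).map fun a => a :: r) :=
        Multiset.bind_map_comm _ _
      have h2 : ((GrL t us).bind fun r => (G s u).map fun a => a :: r)
          = ((G s u).bind fun a => (GrL t us).map fun r => a :: r) :=
        Multiset.bind_map_comm _ _
      rw [CL, CL, C_comm s t u, CL_comm s t us, h1, h2]
      abel
end

mutual
theorem key : ∀ (s t u : R),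
    (G t u).bind (G s) = ((G s t).bind fun v => G v u) + C s t u
  | s, t, .leaf => by
      rw [G_leaf, Multiset.singleton_bind,
        show (fun v : R => G v R.leaf) = fun v : R => {v} from rfl,
        Multiset.bind_singleton, Multiset.map_id']
      simp [C]
  | s, t, .node t1 t2 rest => by
      rw [G_node t, Multiset.add_bind, Multiset.add_bind, Multiset.bind_map,
        Multiset.bind_map, Multiset.bind_map]
      simp only [G_node, GL_cons]
      -- expand the inner graftings and split binds
      simp only [Multiset.bind_add]
      rw [show ((G t t1).bind fun a => (G s a).map fun x => R.node x t2 rest)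
            = ((G t t1).bind (G s)).map (fun x => R.node x t2 rest) from
          (Multiset.map_bind _ _ _).symm,
        show ((G t t2).bind fun b => (G s b).map fun x => R.node t1 x rest)
            = ((G t t2).bind (G s)).map (fun x => R.node t1 x rest) from
          (Multiset.map_bind _ _ _).symm,
        show ((GrL t rest).bind fun r => (GrL s r).map fun x => R.node t1 t2 x)
            = ((GrL t rest).bind (GrL s)).map (fun x => R.node t1 t2 x) from
          (Multiset.map_bind _ _ _).symm,
        key s t t1, key s t t2, keyL s t rest,
        show ((G s t).bind fun v => (G v t1).map fun a => R.node a t2 rest)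
            = ((G s t).bind fun v => G v t1).map (fun a => R.node a t2 rest) from
          (Multiset.map_bind _ _ _).symm,
        show ((G s t).bind fun v => (G v t2).map fun b => R.node t1 b rest)
            = ((G s t).bind fun v => G v t2).map (fun b => R.node t1 b rest) from
          (Multiset.map_bind _ _ _).symm,
        show ((G s t).bind fun v => (GrL v rest).map fun r => R.node t1 t2 r)
            = ((G s t).bind fun v => GrL v rest).map (fun r => R.node t1 t2 r) from
          (Multiset.map_bind _ _ _).symm]
      rw [C]
      simp only [Multiset.map_add]
      abel

theorem keyL : ∀ (s t : R) (us : List R),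
    (GrL t us).bind (GrL s) = ((G s t).bind fun v => GrL v us) + CL s t us
  | s, t, [] => by
      simp [GL_nil, CL, Multiset.bind_zero]
  | s, t, u :: us => by
      rw [GL_cons t, Multiset.add_bind, Multiset.bind_map, Multiset.bind_map]
      simp only [GL_cons]
      simp only [Multiset.bind_add]
      rw [show ((G t u).bind fun a => (G s a).map fun x => x :: us)
            = ((G t u).bind (G s)).map (fun x => x :: us) from
          (Multiset.map_bind _ _ _).symm,
        show ((GrL t us).bind fun r => (GrL s r).map fun x => u :: x)
            = ((GrL t us).bind (GrL s)).map (fun x => u :: x) from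
          (Multiset.map_bind _ _ _).symm,
        key s t u, keyL s t us,
        show ((G s t).bind fun v => (G v u).map fun a => a :: us)
            = ((G s t).bind fun v => G v u).map (fun a => a :: us) from
          (Multiset.map_bind _ _ _).symm,
        show ((G s t).bind fun v => (GrL v us).map fun r => u :: r)
            = ((G s t).bind fun v => GrL v us).map (fun r => u :: r) from
          (Multiset.map_bind _ _ _).symm]
      rw [CL]
      simp only [Multiset.map_add]
      abel
end

/-! ### Bridge to the free module -/

noncomputable def M (m : Multiset R) : R →₀ k :=
  (m.map fun v => Finsupp.single v (1 : k)).sum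

lemma M_zero : (M 0 : R →₀ k) = 0 := rfl

lemma M_add (m n : Multiset R) : (M (m + n) : R →₀ k) = M m + M n := by
  simp [M]

lemma M_cons (v : R) (m : Multiset R) :
    (M (v ::ₘ m) : R →₀ k) = Finsupp.single v 1 + M m := by
  simp [M]

lemma M_singleton (v : R) : (M {v} : R →₀ k) = Finsupp.single v 1 := by
  simp [M]

lemma bp_eq (t u : R) : (bp t u : R →₀ k) = M (G t u) := by
  simp [bp, M, G]

lemma graftMul_zero_right (x : R →₀ k) : graftMul x 0 = 0 := by
  simp [graftMul]

lemma graftMul_zero_left (y : R →₀ k) : graftMul 0 y = 0 := by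
  simp [graftMul]

lemma graftMul_add_right (x y z : R →₀ k) :
    graftMul x (y + z) = graftMul x y + graftMul x z := by
  simp only [graftMul]
  rw [← Finsupp.sum_add]
  apply Finsupp.sum_congr
  intro t _
  rw [Finsupp.sum_add_index'] <;> intros <;> simp [mul_add, add_smul]

lemma graftMul_add_left (x y z : R →₀ k) :
    graftMul (x + y) z = graftMul x z + graftMul y z := by
  simp only [graftMul]
  rw [Finsupp.sum_add_index'] <;> intros <;>
    simp [add_mul, add_smul, Finsupp.sum_add, ← Finsupp.sum_add]

lemma graftMul_e_single (s v : R) :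
    graftMul (e s) (Finsupp.single v (1 : k)) = bp s v := by
  simp [graftMul, e, Finsupp.sum_single_index]

lemma graftMul_single_e (v u : R) :
    graftMul (Finsupp.single v (1 : k)) (e u) = bp v u := by
  simp [graftMul, e, Finsupp.sum_single_index]

lemma graftMul_e_M (s : R) (m : Multiset R) :
    graftMul (e s) (M m) = (M (m.bind (G s)) : R →₀ k) := by
  induction m using Multiset.induction_on with
  | empty => simp [M_zero, graftMul_zero_right]
  | cons v m ih =>
      rw [M_cons, graftMul_add_right, ih, Multiset.cons_bind, M_add,
        graftMul_e_single, bp_eq]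

lemma graftMul_M_e (m : Multiset R) (u : R) :
    graftMul (M m) (e u) = (M (m.bind fun v => G v u) : R →₀ k) := by
  induction m using Multiset.induction_on with
  | empty => simp [M_zero, graftMul_zero_left]
  | cons v m ih =>
      rw [M_cons, graftMul_add_left, ih, Multiset.cons_bind, M_add,
        graftMul_single_e, bp_eq]

lemma graftMul_e_e (t u : R) : graftMul (e t) (e u) = (M (G t u) : R →₀ k) := by
  rw [show (e u : R →₀ k) = M {u} from (M_singleton u).symm, graftMul_e_M,
    Multiset.singleton_bind]

/-- the grafting product `↷σ` is left pre-Lie: for all reduced planar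
trees `s, t, u`, `s ↷σ (t ↷σ u) − (s ↷σ t) ↷σ u = t ↷σ (s ↷σ u) − (t ↷σ s) ↷σ u`. -/
theorem graftMul_left_preLie (s t u : R) :
    graftMul (e s) (graftMul (e t) (e u)) - graftMul (graftMul (e s) (e t)) (e u)
      = graftMul (e t) (graftMul (e s) (e u))
          - graftMul (graftMul (e t) (e s)) (e u : R →₀ k) := by
  rw [graftMul_e_e t u, graftMul_e_e s u, graftMul_e_e s t, graftMul_e_e t s,
    graftMul_e_M, graftMul_e_M, graftMul_M_e, graftMul_M_e,
    key s t u, key t s u, M_add, M_add, C_comm s t u]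
  abel
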